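/- With the same setup, if α is irrational (so w_α is Sturmian), then there exist constants C₁, C₂ > 0 with C₁ n² ≤ c_n(A_α) ≤ C₂ n² for all sufficiently large n; in particular the variety generated by A_α has quadratic codimension growth. -/

import Mathlib

noncomputable section

open Filter Topology

/-- Is a free-magma element a single leaf? -/
def FreeMagma.isLeaf {X : Type*} : FreeMagma X → Bool
  | .of _ => true
  | .mul _ _ => false

/-- The number of occurrences of the subword `a·a` in a monomial in one generator `a`. -/
def countSq : FreeMagma Unit → ℕ
  | .of _ => 0
  | .mul x y => countSq x + countSq y + (if x.isLeaf && y.isLeaf then 1 else 0)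

variable (F : Type) [Field F] [CharZero F]

/-- The free nonassociative (non-unital) algebra on one generator `a`. -/
abbrev FA := FreeNonUnitalNonAssocAlgebra F Unit

/-- The monomial of `FA F` corresponding to a magma word. -/
def mono (m : FreeMagma Unit) : FA F := MonoidAlgebra.single m (1 : F)

/-- The relations ideal of `A`: the span of all monomials containing two or more
subwords equal to `a²`.  The algebra `A` of the paper is `FA F` modulo `relI F`. -/
def relI : Submodule F (FA F) :=
  Submodule.span F {x : FA F | ∃ m : FreeMagma Unit, 2 ≤ countSq m ∧ x = mono F m}

/-- Number of occurrences of the variable `i` in a magma word over `ℕ`. -/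
def occ : FreeMagma ℕ → ℕ → ℕ
  | .of j, i => if j = i then 1 else 0
  | .mul x y, i => occ x i + occ y i

/-- The free nonassociative algebra on countably many variables `x₀, x₁, …`. -/
abbrev FreeN := FreeNonUnitalNonAssocAlgebra F ℕ

/-- The monomial of `FreeN F` corresponding to a magma word. -/
def monoN (t : FreeMagma ℕ) : FreeN F := MonoidAlgebra.single t (1 : F)

/-- `P_n`: the space of multilinear polynomials in the variables `x₀, …, x_{n-1}`. -/
def Pmulti (n : ℕ) : Submodule F (FreeN F) :=
  Submodule.span F {x : FreeN F | ∃ t : FreeMagma ℕ,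
    (∀ i : ℕ, occ t i = if i < n then 1 else 0) ∧ x = monoN F t}

/-- The identities of the algebra `A = FA F / relI F`: polynomials vanishing under every
substitution of elements of `A`. -/
def IdA : Submodule F (FreeN F) :=
  ⨅ xs : ℕ → FA F,
    Submodule.comap (LinearMapClass.linearMap (FreeNonUnitalNonAssocAlgebra.lift F xs)) (relI F)

/-- The `n`-th codimension of `A`: the dimension of `P_n/(P_n ∩ Id(A))`. -/
def codimA (n : ℕ) : ℕ :=
  Module.finrank F (↥(Pmulti F n) ⧸ Submodule.comap (Pmulti F n).subtype (IdA F))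

/-- Apply a word in `L_a` (letter `0`) and `R_a` (letter `1`) to a magma element,
left-to-right. -/
def chain (t : FreeMagma Unit) : List (Fin 2) → FreeMagma Unit
  | [] => t
  | b :: rest => chain (if b = 1 then t * FreeMagma.of () else FreeMagma.of () * t) rest

/-- The monomial `a²`. -/
def aSq : FreeMagma Unit := FreeMagma.of () * FreeMagma.of ()

/-- `subt s m` : `s` occurs as a subterm of the magma word `m`. -/
def subt (s : FreeMagma Unit) : FreeMagma Unit → Prop
  | .of x => s = .of x
  | .mul a b => s = FreeMagma.mul a b ∨ subt s a ∨ subt s b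

/-- `u` is a factor of the infinite word `w`. -/
def IsFactor (u : List (Fin 2)) (w : ℕ → Fin 2) : Prop :=
  ∃ i : ℕ, ∀ j : ℕ, j < u.length → u.getD j 0 = w (i + j)

/-- Monomials lying in the ideal `I_w` of relations of `A_w`: those with two subwords `a²`,
or containing some `a²u(L_a,R_a)` with `u` not a factor of `w` as a subterm. -/
def badMono (w : ℕ → Fin 2) (m : FreeMagma Unit) : Prop :=
  2 ≤ countSq m ∨ ∃ u : List (Fin 2), ¬ IsFactor u w ∧ subt (chain aSq u) m

/-- The relations ideal of the algebra `A_w = A/I_w`, inside the free algebra. -/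
def relIW (w : ℕ → Fin 2) : Submodule F (FA F) :=
  Submodule.span F {x : FA F | ∃ m : FreeMagma Unit, badMono w m ∧ x = mono F m}

/-- The identities of `A_w`. -/
def IdW (w : ℕ → Fin 2) : Submodule F (FreeN F) :=
  ⨅ xs : ℕ → FA F,
    Submodule.comap (LinearMapClass.linearMap (FreeNonUnitalNonAssocAlgebra.lift F xs)) (relIW F w)

/-- The `n`-th codimension of `A_w`. -/
def codimW (w : ℕ → Fin 2) (n : ℕ) : ℕ :=
  Module.finrank F (↥(Pmulti F n) ⧸ Submodule.comap (Pmulti F n).subtype (IdW F w))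

/-- Number of `1`'s among `w 0, …, w (n-1)`. -/
def pcount (w : ℕ → Fin 2) (n : ℕ) : ℕ := ((Finset.range n).filter fun i => w i = 1).card

/-- The set of factors of length `n` of `w`, and the complexity function. -/
def Factors (w : ℕ → Fin 2) (n : ℕ) : Set (Fin n → Fin 2) :=
  {v | ∃ i : ℕ, ∀ j : Fin n, v j = w (i + j)}

noncomputable def Comp (w : ℕ → Fin 2) (n : ℕ) : ℕ := (Factors w n).ncard

/-!
A multilinear polynomial is an identity of `A_w` as soon as every substitution of monomials of
`A` for its variables lands in the span of the bad monomials, so all identities needed below are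
statements about words. Modulo identities, a multilinear monomial of degree `n` vanishes unless it
has the shape `(x_i x_j) u(L, R)` with `u` a factor of `w` of length `n - 2`, and then only the
pair `(i, j)` and `u` matter, not the order of the other variables. If `0u` is not a factor the
right variable of the cherry `x_i x_j` can be replaced by any other, and if `1u` is not a factor
the left one can. So `c_n` is at most `n²` times the number of left special factors of length
`n - 2`, which complexity `m + 1` bounds by `2`, plus `2n` times the number of factors; this gives
`c_n ≤ 4n²`.

Conversely, for every `k < n` and every factor `u` of length `n - 2` with a left extension `bu`
(all but at most one factor), the coefficient of `a²(bu)(L_a, R_a)` in the evaluation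
`x_k ↦ a²`, `x_i ↦ a` (`i ≠ k`) vanishes on identities. These at least `n (n - 2)` functionals
are biorthogonal to caterpillars carrying `x_k` on the `b`-side of the cherry, so
`c_n ≥ n (n - 2)`.
-/

theorem FreeMagma.isLeaf_iff {m : FreeMagma Unit} : m.isLeaf = true ↔ m = .of () := by
  cases m <;> simp [FreeMagma.isLeaf]

theorem countSq_mul (x y : FreeMagma Unit) :
    countSq (x * y) = countSq x + countSq y + if x.isLeaf && y.isLeaf then 1 else 0 := rfl

theorem countSq_mul_of_left_ne {x : FreeMagma Unit} (hx : x ≠ .of ()) (y : FreeMagma Unit) :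
    countSq (x * y) = countSq x + countSq y := by
  simp [countSq_mul, FreeMagma.isLeaf_iff, hx]

theorem countSq_mul_of_right_ne (x : FreeMagma Unit) {y : FreeMagma Unit} (hy : y ≠ .of ()) :
    countSq (x * y) = countSq x + countSq y := by
  simp [countSq_mul, FreeMagma.isLeaf_iff, hy]

theorem countSq_add_le_mul (x y : FreeMagma Unit) : countSq x + countSq y ≤ countSq (x * y) :=
  Nat.le_add_right _ _

theorem countSq_eq_zero_iff {m : FreeMagma Unit} : countSq m = 0 ↔ m = .of () := by
  induction m with
  | ih1 x => simp [countSq]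
  | ih2 x y ihx ihy =>
    refine iff_of_false (fun h => ?_) (by rintro ⟨⟩)
    rw [countSq_mul] at h
    have hx := ihx.1 (by omega)
    have hy := ihy.1 (by omega)
    simp [hx, hy, FreeMagma.isLeaf] at h

theorem countSq_pos_of_ne {m : FreeMagma Unit} (hm : m ≠ .of ()) : 0 < countSq m :=
  Nat.pos_of_ne_zero (mt countSq_eq_zero_iff.1 hm)

theorem countSq_mul_pos (x y : FreeMagma Unit) : 0 < countSq (x * y) :=
  countSq_pos_of_ne (by rintro ⟨⟩)

theorem chain_append (t : FreeMagma Unit) (u v : List (Fin 2)) :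
    chain t (u ++ v) = chain (chain t u) v := by
  induction u generalizing t with
  | nil => rfl
  | cons b r ih => exact ih _

theorem chain_concat (t : FreeMagma Unit) (u : List (Fin 2)) (b : Fin 2) :
    chain t (u ++ [b]) = if b = 1 then chain t u * .of () else .of () * chain t u := by
  rw [chain_append]; rfl

theorem countSq_chain {t : FreeMagma Unit} (ht : t ≠ .of ()) (u : List (Fin 2)) :
    countSq (chain t u) = countSq t := by
  induction u using List.reverseRecOn with
  | nil => rfl
  | append_singleton u b ih =>
    have hne : chain t u ≠ .of () := fun h => by
      rw [h] at ih
      exact ht (countSq_eq_zero_iff.1 ih.symm)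
    rw [chain_concat]
    split
    · rw [countSq_mul_of_left_ne hne, ih]
      exact Nat.add_zero _
    · rw [countSq_mul_of_right_ne _ hne, ih]
      exact Nat.zero_add _

theorem countSq_chain_aSq (u : List (Fin 2)) : countSq (chain aSq u) = 1 :=
  countSq_chain (by rintro ⟨⟩) u

theorem chain_aSq_ne_leaf (u : List (Fin 2)) : chain aSq u ≠ .of () := fun h => by
  simpa [h, countSq] using countSq_chain_aSq u

theorem chain_aSq_injective : Function.Injective (chain aSq) := by
  intro u v h
  induction u using List.reverseRecOn generalizing v with
  | nil =>
    cases v using List.reverseRecOn with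
    | nil => rfl
    | append_singleton v c =>
      rw [chain_concat] at h
      split_ifs at h <;> injection h with h1 h2
      exacts [absurd h1.symm (chain_aSq_ne_leaf v), absurd h2.symm (chain_aSq_ne_leaf v)]
  | append_singleton u b ih =>
    cases v using List.reverseRecOn with
    | nil =>
      rw [chain_concat] at h
      split_ifs at h <;> injection h with h1 h2
      exacts [absurd h1 (chain_aSq_ne_leaf u), absurd h2 (chain_aSq_ne_leaf u)]
    | append_singleton v c =>
      rw [chain_concat, chain_concat] at h
      split_ifs at h with hb hc hc <;> injection h with h1 h2
      · rw [ih h1, hb, hc]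
      · exact absurd h1 (chain_aSq_ne_leaf u)
      · exact absurd h2 (chain_aSq_ne_leaf u)
      · rw [ih h2, show b = c by omega]

theorem subt_refl (m : FreeMagma Unit) : subt m m := by
  cases m <;> simp [subt]

theorem isPrefix_of_subt_chain_aSq {u v : List (Fin 2)} (h : subt (chain aSq u) (chain aSq v)) :
    u <+: v := by
  induction v using List.reverseRecOn with
  | nil =>
    rcases h with h | h | h
    · have h' : chain aSq u = chain aSq [] := h
      rw [chain_aSq_injective h']
    all_goals exact absurd h (chain_aSq_ne_leaf u)
  | append_singleton v b ih =>
    have hsub : chain aSq u = chain aSq (v ++ [b]) ∨ subt (chain aSq u) (chain aSq v) ∨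
        chain aSq u = .of () := by
      rw [chain_concat] at h ⊢
      split_ifs at h ⊢ <;> rcases h with h | h | h <;> simp_all [subt]
    rcases hsub with h | h | h
    · rw [chain_aSq_injective h]
    · exact (ih h).trans (List.prefix_append _ _)
    · exact absurd h (chain_aSq_ne_leaf u)

theorem exists_eq_chain_aSq {m : FreeMagma Unit} (hm : m ≠ .of ()) (h : countSq m ≤ 1) :
    ∃ v, m = chain aSq v := by
  induction m with
  | ih1 x => exact absurd rfl hm
  | ih2 x y ihx ihy =>
    by_cases hx : x = .of () <;> by_cases hy : y = .of ()
    · exact ⟨[], by rw [hx, hy]; rfl⟩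
    · rw [countSq_mul_of_right_ne _ hy] at h
      obtain ⟨v, rfl⟩ := ihy hy (by omega)
      exact ⟨v ++ [0], by rw [hx, chain_concat, if_neg (by decide)]⟩
    · rw [countSq_mul_of_left_ne hx] at h
      obtain ⟨v, rfl⟩ := ihx hx (by omega)
      exact ⟨v ++ [1], by rw [hy, chain_concat, if_pos rfl]⟩
    · rw [countSq_mul_of_left_ne hx] at h
      have := countSq_pos_of_ne hx
      have := countSq_pos_of_ne hy
      omega

section Factors

variable {w : ℕ → Fin 2}

theorem IsFactor.of_infix {u v : List (Fin 2)} (huv : u <:+: v) (hv : IsFactor v w) :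
    IsFactor u w := by
  obtain ⟨s, t, rfl⟩ := huv
  obtain ⟨i, hi⟩ := hv
  refine ⟨i + s.length, fun j hj => ?_⟩
  have := hi (s.length + j) (by simp; omega)
  rwa [List.getD_eq_getElem?_getD, List.getElem?_append_left (by simp; omega),
    List.getElem?_append_right (by omega), Nat.add_sub_cancel_left, ← add_assoc,
    ← List.getD_eq_getElem?_getD] at this

theorem badMono_chain_aSq {u : List (Fin 2)} (hu : ¬ IsFactor u w) : badMono w (chain aSq u) :=
  Or.inr ⟨u, hu, subt_refl _⟩

theorem not_badMono_chain_aSq {u : List (Fin 2)} (hu : IsFactor u w) :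
    ¬ badMono w (chain aSq u) := by
  rintro (h | ⟨v, hv, hsub⟩)
  · rw [countSq_chain_aSq] at h
    omega
  · exact hv (hu.of_infix (isPrefix_of_subt_chain_aSq hsub).isInfix)

theorem badMono_chain_mul_of_left_ne {x : FreeMagma Unit} (hx : x ≠ .of ()) (y : FreeMagma Unit)
    {u : List (Fin 2)} (hu : ¬ IsFactor (1 :: u) w) : badMono w (chain (x * y) u) := by
  rw [badMono, countSq_chain (by rintro ⟨⟩), countSq_mul_of_left_ne hx]
  by_cases hy : y = .of ()
  · by_cases h2 : 2 ≤ countSq x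
    · exact Or.inl (by omega)
    obtain ⟨v, rfl⟩ := exists_eq_chain_aSq hx (by omega)
    refine Or.inr ⟨v ++ 1 :: u, fun h => hu (h.of_infix (List.suffix_append _ _).isInfix), ?_⟩
    rw [hy, show v ++ 1 :: u = v ++ [1] ++ u by simp, chain_append, chain_concat, if_pos rfl]
    exact subt_refl _
  · have := countSq_pos_of_ne hx
    have := countSq_pos_of_ne hy
    exact Or.inl (by omega)

theorem badMono_chain_mul_of_right_ne (x : FreeMagma Unit) {y : FreeMagma Unit} (hy : y ≠ .of ())
    {u : List (Fin 2)} (hu : ¬ IsFactor (0 :: u) w) : badMono w (chain (x * y) u) := by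
  rw [badMono, countSq_chain (by rintro ⟨⟩), countSq_mul_of_right_ne _ hy]
  by_cases hx : x = .of ()
  · by_cases h2 : 2 ≤ countSq y
    · exact Or.inl (by omega)
    obtain ⟨v, rfl⟩ := exists_eq_chain_aSq hy (by omega)
    refine Or.inr ⟨v ++ 0 :: u, fun h => hu (h.of_infix (List.suffix_append _ _).isInfix), ?_⟩
    rw [hx, show v ++ 0 :: u = v ++ [0] ++ u by simp, chain_append, chain_concat,
      if_neg (by decide)]
    exact subt_refl _
  · have := countSq_pos_of_ne hx
    have := countSq_pos_of_ne hy
    exact Or.inl (by omega)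

theorem badMono_chain_mul {u : List (Fin 2)} (hu : ¬ IsFactor u w) (x y : FreeMagma Unit) :
    badMono w (chain (x * y) u) := by
  have hsuffix (b : Fin 2) : ¬ IsFactor (b :: u) w :=
    fun h => hu (h.of_infix (List.suffix_cons _ _).isInfix)
  by_cases hx : x = .of ()
  · by_cases hy : y = .of ()
    · rw [hx, hy]
      exact badMono_chain_aSq hu
    · exact badMono_chain_mul_of_right_ne x hy (hsuffix 0)
  · exact badMono_chain_mul_of_left_ne hx y (hsuffix 1)

end Factors

def varChain (c : FreeMagma ℕ) : List (Fin 2 × ℕ) → FreeMagma ℕ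
  | [] => c
  | (b, k) :: l => varChain (if b = 1 then c * .of k else .of k * c) l

abbrev shape (t : FreeMagma ℕ) : FreeMagma Unit := FreeMagma.map (fun _ => ()) t

section VarChain

variable {w : ℕ → Fin 2} {i j : ℕ} {l : List (Fin 2 × ℕ)} {s : ℕ → FreeMagma Unit}

theorem varChain_concat (c : FreeMagma ℕ) (l : List (Fin 2 × ℕ)) (b : Fin 2) (k : ℕ) :
    varChain c (l ++ [(b, k)]) =
      if b = 1 then varChain c l * .of k else .of k * varChain c l := by
  induction l generalizing c with
  | nil => rfl
  | cons p l ih => exact ih _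

theorem lift_varChain_of_forall_eq_leaf (c : FreeMagma ℕ)
    (h : ∀ k ∈ l.map Prod.snd, s k = .of ()) :
    FreeMagma.lift s (varChain c l) = chain (FreeMagma.lift s c) (l.map Prod.fst) := by
  induction l generalizing c with
  | nil => rfl
  | cons p l ih =>
    obtain ⟨b, k⟩ := p
    simp only [List.map_cons, List.forall_mem_cons] at h
    rw [varChain, ih _ h.2]
    simp only [chain, List.map_cons]
    split <;> simp [h.1]

theorem add_countSq_le_lift_step (c : FreeMagma ℕ) (b : Fin 2) (k : ℕ) :
    countSq (s k) + countSq (FreeMagma.lift s c) ≤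
      countSq (FreeMagma.lift s (if b = 1 then c * .of k else .of k * c)) := by
  split <;> simp only [map_mul, FreeMagma.lift_of] <;>
    linarith [countSq_add_le_mul (FreeMagma.lift s c) (s k),
      countSq_add_le_mul (s k) (FreeMagma.lift s c)]

theorem countSq_lift_le_lift_varChain (c : FreeMagma ℕ) (l : List (Fin 2 × ℕ)) :
    countSq (FreeMagma.lift s c) ≤ countSq (FreeMagma.lift s (varChain c l)) := by
  induction l generalizing c with
  | nil => rfl
  | cons p l ih =>
    obtain ⟨b, k⟩ := p
    exact le_trans (by linarith [add_countSq_le_lift_step (s := s) c b k]) (ih _)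

theorem add_countSq_le_lift_varChain (c : FreeMagma ℕ) {k : ℕ} (hk : k ∈ l.map Prod.snd) :
    countSq (s k) + countSq (FreeMagma.lift s c) ≤ countSq (FreeMagma.lift s (varChain c l)) := by
  induction l generalizing c with
  | nil => simp at hk
  | cons p l ih =>
    obtain ⟨b, k'⟩ := p
    rcases List.mem_cons.1 hk with rfl | hk
    · exact (add_countSq_le_lift_step c b _).trans (countSq_lift_le_lift_varChain _ l)
    · exact le_trans (by linarith [add_countSq_le_lift_step (s := s) c b k']) (ih _ hk)

theorem eq_leaf_of_not_badMono_lift_varChain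
    (h : ¬ badMono w (FreeMagma.lift s (varChain (.of i * .of j) l))) {k : ℕ}
    (hk : k ∈ l.map Prod.snd) : s k = .of () := by
  by_contra hne
  have := add_countSq_le_lift_varChain (s := s) (.of i * .of j) hk
  have := countSq_mul_pos (s i) (s j)
  have := countSq_pos_of_ne hne
  simp only [map_mul, FreeMagma.lift_of] at *
  exact h (Or.inl (by omega))

theorem lift_varChain_of_not_badMono
    (h : ¬ badMono w (FreeMagma.lift s (varChain (.of i * .of j) l))) :
    FreeMagma.lift s (varChain (.of i * .of j) l) = chain (s i * s j) (l.map Prod.fst) := by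
  rw [lift_varChain_of_forall_eq_leaf _ fun k => eq_leaf_of_not_badMono_lift_varChain h]
  simp

theorem badMono_lift_varChain (hu : ¬ IsFactor (l.map Prod.fst) w) (s : ℕ → FreeMagma Unit) :
    badMono w (FreeMagma.lift s (varChain (.of i * .of j) l)) := by
  by_contra h
  rw [lift_varChain_of_not_badMono h] at h
  exact h (badMono_chain_mul hu _ _)

theorem lift_varChain_eq_of_not_badMono {l' : List (Fin 2 × ℕ)}
    (hfst : l.map Prod.fst = l'.map Prod.fst)
    (hsnd : ∀ k, k ∈ l.map Prod.snd ↔ k ∈ l'.map Prod.snd)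
    (h : ¬ badMono w (FreeMagma.lift s (varChain (.of i * .of j) l))) :
    FreeMagma.lift s (varChain (.of i * .of j) l) =
      FreeMagma.lift s (varChain (.of i * .of j) l') := by
  rw [lift_varChain_of_not_badMono h, lift_varChain_of_forall_eq_leaf _
    fun k hk => eq_leaf_of_not_badMono_lift_varChain h ((hsnd k).2 hk), hfst]
  simp

theorem occ_varChain (c : FreeMagma ℕ) (l : List (Fin 2 × ℕ)) (k : ℕ) :
    occ (varChain c l) k = occ c k + (l.map Prod.snd).count k := by
  induction l generalizing c with
  | nil => simp [varChain]
  | cons p l ih =>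
    obtain ⟨b, k'⟩ := p
    rw [varChain, ih, List.map_cons, List.count_cons]
    split <;> simp only [occ] <;> split_ifs <;> simp_all <;> omega

theorem countSq_shape_le (t : FreeMagma ℕ) (s : ℕ → FreeMagma Unit) :
    countSq (shape t) ≤ countSq (FreeMagma.lift s t) := by
  induction t with
  | ih1 k => exact Nat.zero_le _
  | ih2 x y ihx ihy =>
    simp only [map_mul]
    rw [countSq_mul]
    split_ifs with h
    · simp only [Bool.and_eq_true, FreeMagma.isLeaf_iff] at h
      rw [h.1, h.2]
      exact countSq_mul_pos _ _
    · linarith [countSq_add_le_mul (FreeMagma.lift s x) (FreeMagma.lift s y)]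

end VarChain

theorem exists_eq_varChain {t : FreeMagma ℕ} (h : countSq (shape t) = 1) :
    ∃ i j l, t = varChain (.of i * .of j) l := by
  induction t with
  | ih1 k => simp [countSq] at h
  | ih2 x y ihx ihy =>
    simp only [shape, map_mul] at h
    cases x with
    | of a =>
      cases y with
      | of b => exact ⟨a, b, [], rfl⟩
      | mul y₁ y₂ =>
        rw [countSq_mul_of_right_ne _ (by rintro ⟨⟩)] at h
        obtain ⟨i, j, l, hy⟩ := ihy (by simpa [countSq] using h)
        exact ⟨i, j, l ++ [(0, a)], by rw [varChain_concat, if_neg (by decide), ← hy]⟩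
    | mul x₁ x₂ =>
      rw [countSq_mul_of_left_ne (by rintro ⟨⟩)] at h
      cases y with
      | of b =>
        obtain ⟨i, j, l, hx⟩ := ihx (by simpa [countSq] using h)
        exact ⟨i, j, l ++ [(1, b)], by rw [varChain_concat, if_pos rfl, ← hx]⟩
      | mul y₁ y₂ =>
        have := countSq_mul_pos (shape x₁) (shape x₂)
        have := countSq_mul_pos (shape y₁) (shape y₂)
        simp only [shape, FreeMagma.mul_eq, map_mul] at *
        omega

def MultilinearWord (n : ℕ) (t : FreeMagma ℕ) : Prop :=
  ∀ k, occ t k = if k < n then 1 else 0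

def restVars (n i j : ℕ) : List ℕ :=
  (List.range n).filter fun k => k ≠ i ∧ k ≠ j

/-- `(x_i x_j) u(L, R)`, the other variables among `x₀, …, x_{n-1}` attached in increasing
order. -/
def caterpillar (n : ℕ) (u : List (Fin 2)) (i j : ℕ) : FreeMagma ℕ :=
  varChain (.of i * .of j) (u.zip (restVars n i j))

def sqAt (k i : ℕ) : FreeMagma Unit :=
  if i = k then aSq else .of ()

section Caterpillar

variable {w : ℕ → Fin 2} {n i j : ℕ} {u : List (Fin 2)} {s : ℕ → FreeMagma Unit}

theorem mem_restVars {k : ℕ} : k ∈ restVars n i j ↔ k < n ∧ k ≠ i ∧ k ≠ j := by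
  simp [restVars]

theorem nodup_restVars : (restVars n i j).Nodup :=
  List.nodup_range.filter _

theorem length_restVars (hi : i < n) (hj : j < n) (hij : i ≠ j) :
    (restVars n i j).length = n - 2 := by
  have hset : (restVars n i j).toFinset = ((Finset.range n).erase i).erase j := by
    ext k
    simp only [List.mem_toFinset, mem_restVars, Finset.mem_erase, Finset.mem_range]
    tauto
  rw [← List.toFinset_card_of_nodup nodup_restVars, hset,
    Finset.card_erase_of_mem (by simp [hj, Ne.symm hij]), Finset.card_erase_of_mem (by simpa),
    Finset.card_range]
  rfl

theorem map_fst_zip_restVars (hu : u.length = n - 2) (hi : i < n) (hj : j < n) (hij : i ≠ j) :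
    (u.zip (restVars n i j)).map Prod.fst = u :=
  List.map_fst_zip (by rw [hu, length_restVars hi hj hij])

theorem map_snd_zip_restVars (hu : u.length = n - 2) (hi : i < n) (hj : j < n) (hij : i ≠ j) :
    (u.zip (restVars n i j)).map Prod.snd = restVars n i j :=
  List.map_snd_zip (by rw [hu, length_restVars hi hj hij])

theorem multilinearWord_caterpillar (hu : u.length = n - 2) (hi : i < n) (hj : j < n)
    (hij : i ≠ j) : MultilinearWord n (caterpillar n u i j) := by
  intro k
  simp only [caterpillar, occ_varChain, map_snd_zip_restVars hu hi hj hij, nodup_restVars.count,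
    mem_restVars, occ]
  split_ifs <;> omega

theorem lift_caterpillar (hu : u.length = n - 2) (hi : i < n) (hj : j < n) (hij : i ≠ j)
    (h : ∀ k < n, k ≠ i → k ≠ j → s k = .of ()) :
    FreeMagma.lift s (caterpillar n u i j) = chain (s i * s j) u := by
  rw [caterpillar, lift_varChain_of_forall_eq_leaf, map_fst_zip_restVars hu hi hj hij]
  · simp
  · intro k hk
    rw [map_snd_zip_restVars hu hi hj hij, mem_restVars] at hk
    exact h k hk.1 hk.2.1 hk.2.2

theorem eq_leaf_of_not_badMono_lift_caterpillar (hu : u.length = n - 2) (hi : i < n)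
    (hj : j < n) (hij : i ≠ j) (h : ¬ badMono w (FreeMagma.lift s (caterpillar n u i j))) :
    ∀ k < n, k ≠ i → k ≠ j → s k = .of () := fun k hk hki hkj =>
  eq_leaf_of_not_badMono_lift_varChain h (by
    rw [map_snd_zip_restVars hu hi hj hij, mem_restVars]
    exact ⟨hk, hki, hkj⟩)

theorem lift_caterpillar_eq_of_not_isFactor_zero {j' : ℕ} (hu : u.length = n - 2) (hi : i < n)
    (hj : j < n) (hj' : j' < n) (hij : i ≠ j) (hij' : i ≠ j') (h0 : ¬ IsFactor (0 :: u) w)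
    (h : ¬ badMono w (FreeMagma.lift s (caterpillar n u i j))) :
    FreeMagma.lift s (caterpillar n u i j) = FreeMagma.lift s (caterpillar n u i j') := by
  have hrest := eq_leaf_of_not_badMono_lift_caterpillar hu hi hj hij h
  have hval := lift_caterpillar hu hi hj hij hrest
  have hsj : s j = .of () := by
    by_contra hne
    exact h (hval ▸ badMono_chain_mul_of_right_ne _ hne h0)
  have hall (k : ℕ) (hk : k < n) (hki : k ≠ i) : s k = .of () := by
    rcases eq_or_ne k j with rfl | hkj
    exacts [hsj, hrest k hk hki hkj]
  rw [hval, lift_caterpillar hu hi hj' hij' fun k hk hki _ => hall k hk hki, hsj,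
    hall j' hj' (Ne.symm hij')]

theorem lift_caterpillar_eq_of_not_isFactor_one {i' : ℕ} (hu : u.length = n - 2) (hi : i < n)
    (hi' : i' < n) (hj : j < n) (hij : i ≠ j) (hi'j : i' ≠ j) (h1 : ¬ IsFactor (1 :: u) w)
    (h : ¬ badMono w (FreeMagma.lift s (caterpillar n u i j))) :
    FreeMagma.lift s (caterpillar n u i j) = FreeMagma.lift s (caterpillar n u i' j) := by
  have hrest := eq_leaf_of_not_badMono_lift_caterpillar hu hi hj hij h
  have hval := lift_caterpillar hu hi hj hij hrest
  have hsi : s i = .of () := by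
    by_contra hne
    exact h (hval ▸ badMono_chain_mul_of_left_ne hne _ h1)
  have hall (k : ℕ) (hk : k < n) (hkj : k ≠ j) : s k = .of () := by
    rcases eq_or_ne k i with rfl | hki
    exacts [hsi, hrest k hk hki hkj]
  rw [hval, lift_caterpillar hu hi' hj hi'j fun k hk _ hkj => hall k hk hkj, hsi,
    hall i' hi' hi'j]

theorem MultilinearWord.perm_restVars {l : List (Fin 2 × ℕ)}
    (ht : MultilinearWord n (varChain (.of i * .of j) l)) :
    i < n ∧ j < n ∧ i ≠ j ∧ (l.map Prod.snd).Perm (restVars n i j) := by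
  have hocc (k : ℕ) : (if i = k then 1 else 0) + (if j = k then 1 else 0) +
      (l.map Prod.snd).count k = if k < n then 1 else 0 := by
    simpa [occ_varChain, occ] using ht k
  have hi := hocc i
  have hj := hocc j
  refine ⟨by split_ifs at hi <;> omega, by split_ifs at hj <;> omega,
    by rintro rfl; split_ifs at hi <;> omega, ?_⟩
  refine (List.perm_ext_iff_of_nodup ?_ nodup_restVars).2 fun k => ?_
  · exact List.nodup_iff_count_le_one.2 fun k => by have := hocc k; split_ifs at this <;> omega
  · rw [mem_restVars, ← List.count_pos_iff]
    have := hocc k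
    split_ifs at this <;> omega

theorem lift_sqAt_caterpillar_eq_chain_iff {k : ℕ} {v : List (Fin 2)}
    (hu : u.length = n - 2) (hi : i < n) (hj : j < n) (hij : i ≠ j) (hk : k < n) (b : Fin 2) :
    FreeMagma.lift (sqAt k) (caterpillar n u i j) = chain aSq (b :: v) ↔
      v = u ∧ k = if b = 1 then i else j := by
  rcases eq_or_ne k i with rfl | hki
  · rw [lift_caterpillar (s := sqAt k) hu hi hj hij fun m _ hmk _ => if_neg hmk,
      show sqAt k k * sqAt k j = chain aSq [1] by simp [sqAt, Ne.symm hij]; rfl,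
      ← chain_append, chain_aSq_injective.eq_iff]
    fin_cases b <;> simp [hij, eq_comm]
  rcases eq_or_ne k j with rfl | hkj
  · rw [lift_caterpillar (s := sqAt k) hu hi hj hij fun m _ _ hmk => if_neg hmk,
      show sqAt k i * sqAt k k = chain aSq [0] by simp [sqAt, hij]; rfl,
      ← chain_append, chain_aSq_injective.eq_iff]
    fin_cases b <;> simp [hij, eq_comm]
  · refine iff_of_false (fun h => ?_) (by split_ifs <;> simp [hki, hkj])
    have h2 : countSq (sqAt k k) + countSq (FreeMagma.lift (sqAt k) (.of i * .of j)) ≤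
        countSq (FreeMagma.lift (sqAt k) (caterpillar n u i j)) :=
      add_countSq_le_lift_varChain _ (by
        rw [map_snd_zip_restVars hu hi hj hij, mem_restVars]; exact ⟨hk, hki, hkj⟩)
    have hsq : countSq (sqAt k k) = 1 := by rw [sqAt, if_pos rfl]; rfl
    have hpos : 0 < countSq (FreeMagma.lift (sqAt k) (.of i * .of j)) := by
      rw [map_mul]; exact countSq_mul_pos _ _
    rw [h, countSq_chain_aSq] at h2
    omega

end Caterpillar

def factorsOfLength (w : ℕ → Fin 2) (m : ℕ) : Finset (List (Fin 2)) :=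
  (Set.toFinite (Factors w m)).toFinset.image List.ofFn

open Classical in
def leftExt (w : ℕ → Fin 2) (u : List (Fin 2)) : Fin 2 :=
  if IsFactor (1 :: u) w then 1 else 0

open Classical in
def leftExtendableFactors (w : ℕ → Fin 2) (m : ℕ) : Finset (List (Fin 2)) :=
  (factorsOfLength w m).filter fun u => ∃ b : Fin 2, IsFactor (b :: u) w

open Classical in
def leftSpecialFactors (w : ℕ → Fin 2) (m : ℕ) : Finset (List (Fin 2)) :=
  (factorsOfLength w m).filter fun u => ∀ b : Fin 2, IsFactor (b :: u) w

section Sturmian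

variable {w : ℕ → Fin 2} {m : ℕ} {u : List (Fin 2)}

theorem mem_factorsOfLength : u ∈ factorsOfLength w m ↔ u.length = m ∧ IsFactor u w := by
  simp only [factorsOfLength, Finset.mem_image, Set.Finite.mem_toFinset, Factors,
    Set.mem_ofPred_eq]
  constructor
  · rintro ⟨v, ⟨i, hv⟩, rfl⟩
    refine ⟨List.length_ofFn, i, fun j hj => ?_⟩
    rw [List.length_ofFn] at hj
    simpa [List.getD_eq_getElem?_getD, hj] using hv ⟨j, hj⟩
  · rintro ⟨rfl, i, hi⟩
    exact ⟨fun j => u.getD j 0, ⟨i, fun j => hi j j.2⟩,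
      List.ext_getElem (by simp) fun k _ _ => by simp [List.getD_eq_getElem?_getD]⟩

theorem card_factorsOfLength : (factorsOfLength w m).card = Comp w m := by
  rw [factorsOfLength, Finset.card_image_of_injective _ List.ofFn_injective, Comp,
    Set.ncard_eq_toFinset_card]

theorem isFactor_leftExt_cons (h : ∃ b, IsFactor (b :: u) w) :
    IsFactor (leftExt w u :: u) w := by
  unfold leftExt
  split_ifs with h1
  · exact h1
  · exact (Fin.exists_fin_two.1 h).resolve_right h1

theorem exists_isFactor_cons (hu : IsFactor u w)
    (hne : u ≠ List.ofFn fun j : Fin u.length => w j) : ∃ b, IsFactor (b :: u) w := by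
  obtain ⟨i, hi⟩ := hu
  rcases Nat.eq_zero_or_pos i with rfl | hpos
  · refine absurd (List.ext_getElem (by simp) fun k hk _ => ?_) hne
    simpa [List.getD_eq_getElem?_getD, hk] using hi k hk
  · refine ⟨w (i - 1), i - 1, fun j hj => ?_⟩
    cases j with
    | zero => rfl
    | succ j =>
      simpa [show i - 1 + (j + 1) = i + j by omega] using hi j (by simpa using hj)

theorem card_factorsOfLength_le_card_leftExtendable :
    (factorsOfLength w m).card ≤ (leftExtendableFactors w m).card + 1 := by
  classical
  refine (Finset.card_le_card fun u hu => ?_).trans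
    (Finset.card_insert_le (List.ofFn fun j : Fin m => w j) _)
  obtain ⟨hlen, hfac⟩ := mem_factorsOfLength.1 hu
  by_cases hne : u = List.ofFn fun j : Fin u.length => w j
  · rw [hne, hlen]
    exact Finset.mem_insert_self _ _
  · exact Finset.mem_insert_of_mem (Finset.mem_filter.2 ⟨hu, exists_isFactor_cons hfac hne⟩)

theorem card_leftExtendable_add_card_leftSpecial_le :
    (leftExtendableFactors w m).card + (leftSpecialFactors w m).card ≤
      (factorsOfLength w (m + 1)).card := by
  classical
  set A := (leftExtendableFactors w m).image fun u => leftExt w u :: u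
  set B := (leftSpecialFactors w m).image fun u => (0 : Fin 2) :: u
  have hA : A.card = (leftExtendableFactors w m).card :=
    Finset.card_image_of_injective _ fun u v h => (List.cons.inj h).2
  have hB : B.card = (leftSpecialFactors w m).card :=
    Finset.card_image_of_injective _ fun u v h => (List.cons.inj h).2
  have hdisj : Disjoint A B := by
    simp only [A, B, Finset.disjoint_left, Finset.mem_image, not_exists, not_and]
    rintro _ ⟨u, -, rfl⟩ v hv h
    obtain ⟨hb, rfl⟩ := List.cons.inj h
    have h1 := (Finset.mem_filter.1 hv).2 1
    simp [leftExt, h1] at hb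
  have hsub : A ∪ B ⊆ factorsOfLength w (m + 1) := by
    simp only [A, B, Finset.union_subset_iff, Finset.image_subset_iff, mem_factorsOfLength,
      List.length_cons]
    refine ⟨fun u hu => ?_, fun u hu => ?_⟩
    · obtain ⟨hu, hext⟩ := Finset.mem_filter.1 hu
      exact ⟨by rw [(mem_factorsOfLength.1 hu).1], isFactor_leftExt_cons hext⟩
    · obtain ⟨hu, hspec⟩ := Finset.mem_filter.1 hu
      exact ⟨by rw [(mem_factorsOfLength.1 hu).1], hspec 0⟩
  rw [← hA, ← hB, ← Finset.card_union_of_disjoint hdisj]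
  exact Finset.card_le_card hsub

theorem le_card_leftExtendable (hst : ∀ n : ℕ, 1 ≤ n → Comp w n = n + 1) (hm : 1 ≤ m) :
    m ≤ (leftExtendableFactors w m).card := by
  have := card_factorsOfLength_le_card_leftExtendable (w := w) (m := m)
  rw [card_factorsOfLength, hst m hm] at this
  omega

theorem card_leftSpecial_le_two (hst : ∀ n : ℕ, 1 ≤ n → Comp w n = n + 1) (hm : 1 ≤ m) :
    (leftSpecialFactors w m).card ≤ 2 := by
  have h1 := card_factorsOfLength_le_card_leftExtendable (w := w) (m := m)
  have h2 := card_leftExtendable_add_card_leftSpecial_le (w := w) (m := m)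
  rw [card_factorsOfLength, hst m hm] at h1
  rw [card_factorsOfLength, hst (m + 1) (by omega)] at h2
  omega

end Sturmian

namespace Submodule

theorem apply_mem_of_isLinearMap_update {R M N : Type*} [Semiring R] [AddCommMonoid M]
    [Module R M] [AddCommMonoid N] [Module R N] {S : Set M} (hS : span R S = ⊤)
    {P : Submodule R N} {n : ℕ} {f : (ℕ → M) → N}
    (hf : ∀ k < n, ∀ xs, IsLinearMap R fun y => f (Function.update xs k y))
    (hP : ∀ xs, (∀ k < n, xs k ∈ S) → f xs ∈ P) (xs : ℕ → M) : f xs ∈ P := by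
  suffices ∀ m ≤ n, ∀ ys : ℕ → M, (∀ k, m ≤ k → k < n → ys k ∈ S) → f ys ∈ P from
    this n le_rfl xs fun k h1 h2 => absurd h2 (not_lt.2 h1)
  intro m
  induction m with
  | zero => exact fun _ xs hxs => hP xs fun k => hxs k k.zero_le
  | succ m ih =>
    intro hm xs hxs
    have hspan : span R S ≤ P.comap (IsLinearMap.mk' _ (hf m hm xs)) :=
      span_le.2 fun y hy => ih (by omega) _ fun k h1 h2 => by
        rcases eq_or_ne k m with rfl | hk
        · simpa using hy
        · simpa [hk] using hxs k (by omega) h2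
    simpa using hspan (hS ▸ mem_top : xs m ∈ span R S)

variable {K V : Type*} [DivisionRing K] [AddCommGroup V] [Module K V] {P I : Submodule K V}

noncomputable def quotientComapSubtypeEquivMap (P I : Submodule K V) :
    (P ⧸ I.comap P.subtype) ≃ₗ[K] P.map I.mkQ :=
  (quotEquivOfEq _ _ (by rw [LinearMap.ker_comp, ker_mkQ])).trans <|
    (I.mkQ ∘ₗ P.subtype).quotKerEquivRange.trans <|
      LinearEquiv.ofEq _ _ (by rw [LinearMap.range_comp, range_subtype])

theorem map_mkQ_le_span_image {S : Set V} (h : P ≤ span K S ⊔ I) :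
    P.map I.mkQ ≤ span K (I.mkQ '' S) := by
  calc P.map I.mkQ ≤ (span K S ⊔ I).map I.mkQ := map_mono h
    _ = span K (I.mkQ '' S) := by rw [map_sup, mkQ_map_self, sup_bot_eq, map_span]

theorem finite_quotient_comap_subtype (S : Finset V) (h : P ≤ span K S ⊔ I) :
    Module.Finite K (P ⧸ I.comap P.subtype) :=
  have : FiniteDimensional K (span K (I.mkQ '' S)) :=
    FiniteDimensional.span_of_finite K (S.finite_toSet.image _)
  have := finiteDimensional_of_le (map_mkQ_le_span_image h)
  Module.Finite.equiv (quotientComapSubtypeEquivMap P I).symm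

theorem finrank_quotient_comap_subtype_le_card (S : Finset V) (h : P ≤ span K S ⊔ I) :
    Module.finrank K (P ⧸ I.comap P.subtype) ≤ S.card := by
  classical
  rw [(quotientComapSubtypeEquivMap P I).finrank_eq]
  calc Module.finrank K (P.map I.mkQ)
      ≤ Module.finrank K (span K ((S.image I.mkQ : Finset (V ⧸ I)) : Set (V ⧸ I))) :=
        finrank_mono (by simpa using map_mkQ_le_span_image h)
    _ ≤ (S.image I.mkQ).card := finrank_span_finset_le_card _
    _ ≤ S.card := Finset.card_image_le

theorem card_le_finrank_quotient_comap_subtype {ι : Type*} [Fintype ι] [DecidableEq ι]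
    [Module.Finite K (P ⧸ I.comap P.subtype)] (ψ : ι → P) (f : ι → V →ₗ[K] K)
    (hf : ∀ k, I ≤ LinearMap.ker (f k))
    (hfψ : ∀ k k', f k' (ψ k) = if k = k' then 1 else 0) :
    Fintype.card ι ≤ Module.finrank K (P ⧸ I.comap P.subtype) := by
  refine LinearIndependent.fintype_card_le_finrank (b := fun k => Quotient.mk (ψ k)) ?_
  refine Fintype.linearIndependent_iff.2 fun g hg k' => ?_
  have hker : I.comap P.subtype ≤ LinearMap.ker (f k' ∘ₗ P.subtype) := fun x hx => hf k' hx
  simpa [map_sum, hfψ] using congrArg ((I.comap P.subtype).liftQ _ hker) hg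

end Submodule

theorem FreeMagma.lift_congr_of_occ {β : Type*} [Mul β] {xs ys : ℕ → β} (t : FreeMagma ℕ)
    (h : ∀ k, occ t k ≠ 0 → xs k = ys k) : FreeMagma.lift xs t = FreeMagma.lift ys t := by
  induction t with
  | ih1 i => exact h i (by simp [occ])
  | ih2 x y ihx ihy =>
    simp only [map_mul]
    rw [ihx fun k hk => h k (by simp only [occ]; omega),
      ihy fun k hk => h k (by simp only [occ]; omega)]

theorem FreeMagma.isLinearMap_lift_update {R A : Type*} [CommSemiring R]
    [NonUnitalNonAssocSemiring A] [Module R A] [IsScalarTower R A A] [SMulCommClass R A A]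
    {t : FreeMagma ℕ} {k : ℕ} (ht : occ t k = 1) (xs : ℕ → A) :
    IsLinearMap R fun y => FreeMagma.lift (Function.update xs k y) t := by
  have hconst {t : FreeMagma ℕ} (h0 : occ t k = 0) (y : A) :
      FreeMagma.lift (Function.update xs k y) t = FreeMagma.lift xs t :=
    FreeMagma.lift_congr_of_occ t fun i hi => Function.update_of_ne (by rintro rfl; omega) _ _
  induction t with
  | ih1 i =>
    obtain rfl : i = k := by simpa [occ] using ht
    simp only [FreeMagma.lift_of, Function.update_self]
    exact LinearMap.id.isLinear
  | ih2 x y ihx ihy =>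
    simp only [occ] at ht
    simp only [map_mul]
    rcases Nat.eq_zero_or_pos (occ x k) with hx | hx
    · simp only [hconst hx]
      exact ((LinearMap.mulLeft R _).comp (IsLinearMap.mk' _ (ihy (by omega)))).isLinear
    · simp only [hconst (show occ y k = 0 by omega)]
      exact ((LinearMap.mulRight R _).comp (IsLinearMap.mk' _ (ihx (by omega)))).isLinear

section Identities

variable (F : Type) [Field F] {w : ℕ → Fin 2} {n : ℕ}

theorem mono_eq_basis (m : FreeMagma Unit) : mono F m = MonoidAlgebra.basis (FreeMagma Unit) F m :=
  rfl

theorem mono_mul (x y : FreeMagma Unit) : mono F (x * y) = mono F x * mono F y :=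
  map_mul (MonoidAlgebra.ofMagma F (FreeMagma Unit)) x y

theorem monoN_mul (x y : FreeMagma ℕ) : monoN F (x * y) = monoN F x * monoN F y :=
  map_mul (MonoidAlgebra.ofMagma F (FreeMagma ℕ)) x y

theorem lift_monoN (xs : ℕ → FA F) (t : FreeMagma ℕ) :
    FreeNonUnitalNonAssocAlgebra.lift F xs (monoN F t) = FreeMagma.lift xs t := by
  induction t with
  | ih1 i => exact FreeNonUnitalNonAssocAlgebra.lift_of_apply F xs i
  | ih2 x y ihx ihy => rw [monoN_mul, map_mul, map_mul, ihx, ihy]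

theorem FreeMagma.lift_mono (s : ℕ → FreeMagma Unit) (t : FreeMagma ℕ) :
    FreeMagma.lift (fun k => mono F (s k)) t = mono F (FreeMagma.lift s t) := by
  induction t with
  | ih1 i => rfl
  | ih2 x y ihx ihy => rw [map_mul, map_mul, ihx, ihy, mono_mul]

theorem monoN_mem_Pmulti {t : FreeMagma ℕ} (ht : MultilinearWord n t) :
    monoN F t ∈ Pmulti F n :=
  Submodule.subset_span ⟨t, ht, rfl⟩

theorem mono_mem_relIW {m : FreeMagma Unit} (h : badMono w m) : mono F m ∈ relIW F w :=
  Submodule.subset_span ⟨m, h, rfl⟩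

theorem mem_IdW_iff {z : FreeN F} :
    z ∈ IdW F w ↔
      ∀ xs : ℕ → FA F, FreeNonUnitalNonAssocAlgebra.lift F xs z ∈ relIW F w := by
  simp [IdW, Submodule.mem_iInf]

theorem lift_congr_of_mem_Pmulti {z : FreeN F} (hz : z ∈ Pmulti F n) {xs ys : ℕ → FA F}
    (h : ∀ k < n, xs k = ys k) :
    FreeNonUnitalNonAssocAlgebra.lift F xs z = FreeNonUnitalNonAssocAlgebra.lift F ys z := by
  induction hz using Submodule.span_induction with
  | mem z hz =>
    obtain ⟨t, ht, rfl⟩ := hz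
    rw [lift_monoN, lift_monoN]
    exact FreeMagma.lift_congr_of_occ t fun k hk => h k (by by_contra; simp_all)
  | zero => simp
  | add x y _ _ hx hy => simp [hx, hy]
  | smul c x _ hx => simp [hx]

theorem isLinearMap_lift_update_of_mem_Pmulti {z : FreeN F} (hz : z ∈ Pmulti F n) {k : ℕ}
    (hk : k < n) (xs : ℕ → FA F) :
    IsLinearMap F fun y => FreeNonUnitalNonAssocAlgebra.lift F (Function.update xs k y) z := by
  induction hz using Submodule.span_induction with
  | mem z hz =>
    obtain ⟨t, ht, rfl⟩ := hz
    simp only [lift_monoN]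
    exact FreeMagma.isLinearMap_lift_update (by simp [ht k, hk]) xs
  | zero =>
    simp only [map_zero]
    exact (0 : FA F →ₗ[F] FA F).isLinear
  | add x y _ _ hx hy =>
    simp only [map_add]
    exact (IsLinearMap.mk' _ hx + IsLinearMap.mk' _ hy).isLinear
  | smul c x _ hx =>
    simp only [map_smul]
    exact (c • IsLinearMap.mk' _ hx).isLinear

theorem mem_IdW_of_forall_mono {z : FreeN F} (hz : z ∈ Pmulti F n)
    (h : ∀ s : ℕ → FreeMagma Unit,
      FreeNonUnitalNonAssocAlgebra.lift F (fun k => mono F (s k)) z ∈ relIW F w) :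
    z ∈ IdW F w := by
  refine (mem_IdW_iff F).2 <| Submodule.apply_mem_of_isLinearMap_update
    (MonoidAlgebra.basis (FreeMagma Unit) F).span_eq
    (fun k hk xs => isLinearMap_lift_update_of_mem_Pmulti F hz hk xs) fun xs hxs => ?_
  have : ∀ k, ∃ m, k < n → mono F m = xs k := fun k =>
    if hk : k < n then (hxs k hk).imp fun _ h _ => h else ⟨.of (), fun h => absurd h hk⟩
  choose s hs using this
  rw [← lift_congr_of_mem_Pmulti F hz hs]
  exact h s

theorem monoN_mem_IdW {t : FreeMagma ℕ} (ht : MultilinearWord n t)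
    (h : ∀ s, badMono w (FreeMagma.lift s t)) : monoN F t ∈ IdW F w :=
  mem_IdW_of_forall_mono F (monoN_mem_Pmulti F ht) fun s => by
    rw [lift_monoN, FreeMagma.lift_mono]
    exact mono_mem_relIW F (h s)

theorem monoN_sub_monoN_mem_IdW {t t' : FreeMagma ℕ} (ht : MultilinearWord n t)
    (ht' : MultilinearWord n t')
    (h : ∀ s, ¬ badMono w (FreeMagma.lift s t) → FreeMagma.lift s t = FreeMagma.lift s t')
    (h' : ∀ s, ¬ badMono w (FreeMagma.lift s t') → FreeMagma.lift s t' = FreeMagma.lift s t) :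
    monoN F t - monoN F t' ∈ IdW F w :=
  mem_IdW_of_forall_mono F (sub_mem (monoN_mem_Pmulti F ht) (monoN_mem_Pmulti F ht')) fun s => by
    rw [map_sub, lift_monoN, lift_monoN, FreeMagma.lift_mono, FreeMagma.lift_mono]
    by_cases hb : badMono w (FreeMagma.lift s t)
    · by_cases hb' : badMono w (FreeMagma.lift s t')
      · exact sub_mem (mono_mem_relIW F hb) (mono_mem_relIW F hb')
      · rw [h' s hb', sub_self]
        exact zero_mem _
    · rw [h s hb, sub_self]
      exact zero_mem _

end Identities

def partner (k : ℕ) : ℕ := if k = 0 then 1 else 0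

theorem partner_ne (k : ℕ) : partner k ≠ k := by
  unfold partner; split_ifs <;> omega

theorem partner_lt {n : ℕ} (hn : 2 ≤ n) (k : ℕ) : partner k < n := by
  unfold partner; split_ifs <;> omega

def cherry (b : Fin 2) (k : ℕ) : ℕ × ℕ :=
  if b = 1 then (k, partner k) else (partner k, k)

theorem cherry_lt {n k : ℕ} (hn : 2 ≤ n) (hk : k < n) (b : Fin 2) :
    (cherry b k).1 < n ∧ (cherry b k).2 < n := by
  unfold cherry
  split_ifs <;> exact ⟨by simp [hk, partner_lt hn], by simp [hk, partner_lt hn]⟩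

theorem cherry_fst_ne_snd (b : Fin 2) (k : ℕ) : (cherry b k).1 ≠ (cherry b k).2 := by
  unfold cherry
  split_ifs <;> simp [partner_ne, (partner_ne k).symm]

theorem ite_cherry (b : Fin 2) (k : ℕ) :
    (if b = 1 then (cherry b k).1 else (cherry b k).2) = k := by
  unfold cherry
  split_ifs <;> rfl

def canonicalTriples (w : ℕ → Fin 2) (n : ℕ) : Finset (List (Fin 2) × ℕ × ℕ) :=
  leftSpecialFactors w (n - 2) ×ˢ Finset.range n ×ˢ Finset.range n ∪
    (factorsOfLength w (n - 2) ×ˢ Finset.range n).image (fun p => (p.1, p.2, partner p.2)) ∪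
    (factorsOfLength w (n - 2) ×ˢ Finset.range n).image (fun p => (p.1, partner p.2, p.2))

section CanonicalTriples

variable {w : ℕ → Fin 2} {n : ℕ} {u : List (Fin 2)}

theorem mem_canonicalTriples_of_mem_leftSpecial (hu : u ∈ leftSpecialFactors w (n - 2))
    {i j : ℕ} (hi : i < n) (hj : j < n) : (u, i, j) ∈ canonicalTriples w n := by
  simp [canonicalTriples, hu, hi, hj]

theorem mem_canonicalTriples_right (hu : u ∈ factorsOfLength w (n - 2)) {i : ℕ} (hi : i < n) :
    (u, i, partner i) ∈ canonicalTriples w n := by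
  simp [canonicalTriples, hu, hi]

theorem mem_canonicalTriples_left (hu : u ∈ factorsOfLength w (n - 2)) {j : ℕ} (hj : j < n) :
    (u, partner j, j) ∈ canonicalTriples w n := by
  simp [canonicalTriples, hu, hj]

theorem card_canonicalTriples_le (hst : ∀ n : ℕ, 1 ≤ n → Comp w n = n + 1) (hn : 3 ≤ n) :
    (canonicalTriples w n).card ≤ 4 * n ^ 2 := by
  have hspecial := card_leftSpecial_le_two hst (m := n - 2) (by omega)
  have hfactors : (factorsOfLength w (n - 2)).card = n - 1 := by
    rw [card_factorsOfLength, hst _ (by omega)]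
    omega
  have hs : (leftSpecialFactors w (n - 2) ×ˢ Finset.range n ×ˢ Finset.range n).card ≤
      2 * (n * n) := by
    rw [Finset.card_product, Finset.card_product, Finset.card_range]
    exact Nat.mul_le_mul_right _ hspecial
  have hf : (factorsOfLength w (n - 2) ×ˢ Finset.range n).card ≤ n * n := by
    rw [Finset.card_product, hfactors, Finset.card_range]
    exact Nat.mul_le_mul_right _ (Nat.sub_le n 1)
  calc (canonicalTriples w n).card
      ≤ 2 * (n * n) + n * n + n * n :=
        (Finset.card_union_le _ _).trans <| add_le_add ((Finset.card_union_le _ _).trans <|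
          add_le_add hs (Finset.card_image_le.trans hf)) (Finset.card_image_le.trans hf)
    _ = 4 * n ^ 2 := by ring

end CanonicalTriples

section NormalForm

variable (F : Type) [Field F] {w : ℕ → Fin 2} {n : ℕ}

theorem monoN_caterpillar_sub_mem_IdW_of_not_isFactor_zero {u : List (Fin 2)} {i j j' : ℕ}
    (hu : u.length = n - 2) (hi : i < n) (hj : j < n) (hj' : j' < n) (hij : i ≠ j)
    (hij' : i ≠ j') (h0 : ¬ IsFactor (0 :: u) w) :
    monoN F (caterpillar n u i j) - monoN F (caterpillar n u i j') ∈ IdW F w :=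
  monoN_sub_monoN_mem_IdW F (multilinearWord_caterpillar hu hi hj hij)
    (multilinearWord_caterpillar hu hi hj' hij')
    (fun _ => lift_caterpillar_eq_of_not_isFactor_zero hu hi hj hj' hij hij' h0)
    (fun _ => lift_caterpillar_eq_of_not_isFactor_zero hu hi hj' hj hij' hij h0)

theorem monoN_caterpillar_sub_mem_IdW_of_not_isFactor_one {u : List (Fin 2)} {i i' j : ℕ}
    (hu : u.length = n - 2) (hi : i < n) (hi' : i' < n) (hj : j < n) (hij : i ≠ j)
    (hi'j : i' ≠ j) (h1 : ¬ IsFactor (1 :: u) w) :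
    monoN F (caterpillar n u i j) - monoN F (caterpillar n u i' j) ∈ IdW F w :=
  monoN_sub_monoN_mem_IdW F (multilinearWord_caterpillar hu hi hj hij)
    (multilinearWord_caterpillar hu hi' hj hi'j)
    (fun _ => lift_caterpillar_eq_of_not_isFactor_one hu hi hi' hj hij hi'j h1)
    (fun _ => lift_caterpillar_eq_of_not_isFactor_one hu hi' hi hj hi'j hij h1)

theorem monoN_mem_IdW_or_exists_caterpillar (hn : 2 ≤ n) {t : FreeMagma ℕ}
    (ht : MultilinearWord n t) :
    monoN F t ∈ IdW F w ∨ ∃ u ∈ factorsOfLength w (n - 2), ∃ i < n, ∃ j < n, i ≠ j ∧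
      monoN F t - monoN F (caterpillar n u i j) ∈ IdW F w := by
  rcases lt_trichotomy (countSq (shape t)) 1 with h0 | h1 | h2
  · obtain ⟨k, rfl⟩ : ∃ k, t = .of k := by
      cases t with
      | of k => exact ⟨k, rfl⟩
      | mul x y => exact absurd (countSq_eq_zero_iff.1 (Nat.lt_one_iff.1 h0)) (by rintro ⟨⟩)
    have h0 := ht 0
    have h1 := ht 1
    simp only [occ] at h0 h1
    split_ifs at h0 h1 <;> omega
  · obtain ⟨i, j, l, rfl⟩ := exists_eq_varChain h1
    obtain ⟨hi, hj, hij, hperm⟩ := ht.perm_restVars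
    have hu : (l.map Prod.fst).length = n - 2 := by
      simpa [length_restVars hi hj hij] using hperm.length_eq
    by_cases hfac : IsFactor (l.map Prod.fst) w
    · have hsnd (k : ℕ) : k ∈ l.map Prod.snd ↔
          k ∈ ((l.map Prod.fst).zip (restVars n i j)).map Prod.snd := by
        rw [map_snd_zip_restVars hu hi hj hij, hperm.mem_iff]
      refine Or.inr ⟨_, mem_factorsOfLength.2 ⟨hu, hfac⟩, i, hi, j, hj, hij,
        monoN_sub_monoN_mem_IdW F ht (multilinearWord_caterpillar hu hi hj hij)
          (fun _ => lift_varChain_eq_of_not_badMono ?_ hsnd)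
          (fun _ => lift_varChain_eq_of_not_badMono ?_ fun k => (hsnd k).symm)⟩
      all_goals rw [map_fst_zip_restVars hu hi hj hij]
    · exact Or.inl (monoN_mem_IdW F ht (badMono_lift_varChain hfac))
  · exact Or.inl (monoN_mem_IdW F ht fun s => Or.inl (h2.trans_le (countSq_shape_le t s)))

theorem exists_canonicalTriples_sub_mem_IdW (hn : 2 ≤ n) {u : List (Fin 2)}
    (hu : u ∈ factorsOfLength w (n - 2)) {i j : ℕ} (hi : i < n) (hj : j < n) (hij : i ≠ j) :
    ∃ c ∈ canonicalTriples w n,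
      monoN F (caterpillar n u i j) - monoN F (caterpillar n c.1 c.2.1 c.2.2) ∈ IdW F w := by
  classical
  have hlen := (mem_factorsOfLength.1 hu).1
  have hp (k : ℕ) := partner_lt hn k
  have hpne (k : ℕ) := partner_ne k
  by_cases h0 : IsFactor (0 :: u) w <;> by_cases h1 : IsFactor (1 :: u) w
  · refine ⟨(u, i, j), mem_canonicalTriples_of_mem_leftSpecial ?_ hi hj, by simp⟩
    exact Finset.mem_filter.2 ⟨hu, Fin.forall_fin_two.2 ⟨h0, h1⟩⟩
  · exact ⟨(u, partner j, j), mem_canonicalTriples_left hu hj,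
      monoN_caterpillar_sub_mem_IdW_of_not_isFactor_one F hlen hi (hp j) hj hij (hpne j) h1⟩
  · exact ⟨(u, i, partner i), mem_canonicalTriples_right hu hi,
      monoN_caterpillar_sub_mem_IdW_of_not_isFactor_zero F hlen hi hj (hp i) hij (hpne i).symm h0⟩
  · refine ⟨(u, partner (partner i), partner i), mem_canonicalTriples_left hu (hp i), ?_⟩
    rw [← sub_add_sub_cancel _ (monoN F (caterpillar n u i (partner i)))]
    exact add_mem
      (monoN_caterpillar_sub_mem_IdW_of_not_isFactor_zero F hlen hi hj (hp i) hij (hpne i).symm h0)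
      (monoN_caterpillar_sub_mem_IdW_of_not_isFactor_one F hlen hi (hp _) (hp i) (hpne i).symm
        (hpne _) h1)

end NormalForm

open Classical in
def canonicalMonomials (F : Type) [Field F] (w : ℕ → Fin 2) (n : ℕ) : Finset (FreeN F) :=
  (canonicalTriples w n).image fun c => monoN F (caterpillar n c.1 c.2.1 c.2.2)

noncomputable def coeffSqAt (F : Type) [Field F] (k : ℕ) (v : List (Fin 2)) :
    FreeN F →ₗ[F] F :=
  ((MonoidAlgebra.basis (FreeMagma Unit) F).coord (chain aSq v)).comp
    (LinearMapClass.linearMap (FreeNonUnitalNonAssocAlgebra.lift F fun i => mono F (sqAt k i)))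

section Codimension

variable (F : Type) [Field F] {w : ℕ → Fin 2} {n : ℕ}

theorem Pmulti_le_span_sup_IdW (hn : 2 ≤ n) :
    Pmulti F n ≤ Submodule.span F ↑(canonicalMonomials F w n) ⊔ IdW F w := by
  classical
  refine Submodule.span_le.2 ?_
  rintro _ ⟨t, ht, rfl⟩
  rcases monoN_mem_IdW_or_exists_caterpillar F hn ht with h | ⟨u, hu, i, hi, j, hj, hij, h⟩
  · exact Submodule.mem_sup_right h
  obtain ⟨c, hc, hc'⟩ := exists_canonicalTriples_sub_mem_IdW F hn hu hi hj hij
  rw [← add_sub_cancel (monoN F (caterpillar n c.1 c.2.1 c.2.2)) (monoN F t),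
    ← sub_add_sub_cancel (monoN F t) (monoN F (caterpillar n u i j))]
  exact Submodule.add_mem_sup (Submodule.subset_span (Finset.mem_coe.2
    (Finset.mem_image_of_mem _ hc))) (add_mem h hc')

theorem card_canonicalMonomials_le (hst : ∀ n : ℕ, 1 ≤ n → Comp w n = n + 1)
    (hn : 3 ≤ n) : (canonicalMonomials F w n).card ≤ 4 * n ^ 2 := by
  classical
  exact Finset.card_image_le.trans (card_canonicalTriples_le hst hn)

theorem codimW_le (hst : ∀ n : ℕ, 1 ≤ n → Comp w n = n + 1) (hn : 3 ≤ n) :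
    codimW F w n ≤ 4 * n ^ 2 :=
  (Submodule.finrank_quotient_comap_subtype_le_card _ (Pmulti_le_span_sup_IdW F (by omega))).trans
    (card_canonicalMonomials_le F hst hn)

theorem coeffSqAt_monoN (k : ℕ) (v : List (Fin 2)) (t : FreeMagma ℕ) :
    coeffSqAt F k v (monoN F t) = if FreeMagma.lift (sqAt k) t = chain aSq v then 1 else 0 := by
  change (MonoidAlgebra.basis (FreeMagma Unit) F).coord _
    (FreeNonUnitalNonAssocAlgebra.lift F _ (monoN F t)) = _
  rw [lift_monoN, FreeMagma.lift_mono, mono_eq_basis, Module.Basis.coord_apply,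
    Module.Basis.repr_self, Finsupp.single_apply]

theorem IdW_le_ker_coeffSqAt (k : ℕ) {v : List (Fin 2)} (hv : IsFactor v w) :
    IdW F w ≤ LinearMap.ker (coeffSqAt F k v) := by
  intro z hz
  suffices relIW F w ≤
      LinearMap.ker ((MonoidAlgebra.basis (FreeMagma Unit) F).coord (chain aSq v)) from
    this ((mem_IdW_iff F).1 hz _)
  refine Submodule.span_le.2 ?_
  rintro _ ⟨m, hm, rfl⟩
  have hne : m ≠ chain aSq v := by
    rintro rfl
    exact not_badMono_chain_aSq hv hm
  rw [SetLike.mem_coe, LinearMap.mem_ker, mono_eq_basis, Module.Basis.coord_apply,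
    Module.Basis.repr_self, Finsupp.single_apply, if_neg hne]

theorem mul_le_codimW (hst : ∀ n : ℕ, 1 ≤ n → Comp w n = n + 1) (hn : 3 ≤ n) :
    n * (n - 2) ≤ codimW F w n := by
  classical
  have : Module.Finite F (Pmulti F n ⧸ (IdW F w).comap (Pmulti F n).subtype) :=
    Submodule.finite_quotient_comap_subtype _ (Pmulti_le_span_sup_IdW F (by omega))
  let ι := Fin n × leftExtendableFactors w (n - 2)
  have hcard : n * (n - 2) ≤ Fintype.card ι := by
    simpa [ι] using Nat.mul_le_mul_left n (le_card_leftExtendable (m := n - 2) hst (by omega))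
  have hext (u : leftExtendableFactors w (n - 2)) :
      (u : List (Fin 2)).length = n - 2 ∧ ∃ b, IsFactor (b :: u) w :=
    ⟨(mem_factorsOfLength.1 (Finset.mem_filter.1 u.2).1).1, (Finset.mem_filter.1 u.2).2⟩
  -- the cherry puts `x_k` where `sqAt k` produces `chain aSq (leftExt w u :: u)`
  let c (p : ι) := cherry (leftExt w p.2) p.1
  have hc (p : ι) := cherry_lt (by omega : 2 ≤ n) p.1.2 (leftExt w p.2)
  let ψ (p : ι) : Pmulti F n :=
    ⟨monoN F (caterpillar n p.2 (c p).1 (c p).2), monoN_mem_Pmulti F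
      (multilinearWord_caterpillar (hext p.2).1 (hc p).1 (hc p).2 (cherry_fst_ne_snd _ _))⟩
  refine hcard.trans (Submodule.card_le_finrank_quotient_comap_subtype ψ
    (fun p => coeffSqAt F p.1 (leftExt w p.2 :: p.2))
    (fun p => IdW_le_ker_coeffSqAt F _ (isFactor_leftExt_cons (hext p.2).2)) fun p p' => ?_)
  refine (coeffSqAt_monoN F _ _ _).trans (if_congr ?_ rfl rfl)
  rw [lift_sqAt_caterpillar_eq_chain_iff (hext p.2).1 (hc p).1 (hc p).2 (cherry_fst_ne_snd _ _)
    p'.1.2]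
  obtain ⟨k, u⟩ := p
  obtain ⟨k', u'⟩ := p'
  simp only [ι, Prod.mk.injEq]
  constructor
  · rintro ⟨hu, hk⟩
    obtain rfl : u' = u := Subtype.ext hu
    exact ⟨Fin.ext (hk.trans (ite_cherry _ _)).symm, rfl⟩
  · rintro ⟨rfl, rfl⟩
    exact ⟨rfl, (ite_cherry _ _).symm⟩

end Codimension

theorem codim_quadratic_growth (w : ℕ → Fin 2)
    (hst : ∀ n : ℕ, 1 ≤ n → Comp w n = n + 1) :
    ∃ C₁ C₂ : ℝ, 0 < C₁ ∧ 0 < C₂ ∧ ∃ N : ℕ, ∀ n : ℕ, N ≤ n →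
      C₁ * n ^ 2 ≤ (codimW F w n : ℝ) ∧ (codimW F w n : ℝ) ≤ C₂ * n ^ 2 := by
  refine ⟨1 / 3, 4, by norm_num, by norm_num, 3, fun n hn => ⟨?_, ?_⟩⟩
  · have hlower : ((n * (n - 2) : ℕ) : ℝ) ≤ codimW F w n := by
      exact_mod_cast mul_le_codimW F hst hn
    have hn' : (3 : ℝ) ≤ n := by exact_mod_cast hn
    push_cast [Nat.cast_sub (by omega : 2 ≤ n)] at hlower
    nlinarith
  · exact_mod_cast codimW_le F hst hn
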